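/- Let N, l, m be positive integers with l ≤ N − 1, N ≠ 2l and 1 ≤ m ≤ N. Then for every integer n ≥ 1, the 2n-th moment of Ũ_l(m,N) satisfies E[(Ũ_l(m,N))^{2n}] ≤ n^{n+1}·N^n / (2^{2n−1}·e^{n−1}). -/

import Mathlib

/-!
By Hoeffding's lemma each centred term `cos (2πjl/N) (B_j - m/N)` is sub-Gaussian with variance
proxy `cos² (2πjl/N) / 4`, so by independence their sum is sub-Gaussian with proxy
`∑ cos² / 4 = N / 8` (as `N ∤ 2l`). Since `∑ cos (2πjl/N) = 0` (as `N ∤ l`), that sum is `U` itself.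
Integrating `x ^ (2n) ≤ (2n / (t e)) ^ (2n) (e^{tx} + e^{-tx})` at the optimal `t` gives
`E[U ^ (2n)] ≤ 2 (nN / (4e)) ^ n`, which is the claimed bound divided by `n e`.
-/

open MeasureTheory ProbabilityTheory Finset Real
open scoped NNReal ENNReal

lemma sum_Icc_one_eq_sum_fin {M : Type*} [AddCommMonoid M] (f : ℕ → M) (N : ℕ) :
    ∑ j ∈ Icc 1 N, f j = ∑ i : Fin N, f (i + 1) := by
  rw [Fin.sum_univ_eq_sum_range (fun i ↦ f (i + 1)), ← Ico_add_one_right_eq_Icc,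
    sum_Ico_eq_sum_range]
  simp [add_comm]

lemma sum_Icc_pow_eq_zero {K : Type*} [Field K] {z : K} {N : ℕ} (hz : z ≠ 1) (hzN : z ^ N = 1) :
    ∑ j ∈ Icc 1 N, z ^ j = 0 := by
  rw [← Ico_add_one_right_eq_Icc, sum_Ico_eq_sum_range]
  simp [pow_add, ← mul_sum, geom_sum_eq hz, hzN]

lemma sum_cos_eq_zero_of_not_dvd {N k : ℕ} (hk : ¬ N ∣ k) :
    ∑ j ∈ Icc 1 N, cos (2 * π * j * k / N) = 0 := by
  obtain rfl | hN := eq_or_ne N 0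
  · simp
  set ζ := Complex.exp (2 * π * Complex.I / N)
  have hζ : IsPrimitiveRoot ζ N := Complex.isPrimitiveRoot_exp N hN
  have hz : ζ ^ k ≠ 1 := fun h ↦ hk ((hζ.pow_eq_one_iff_dvd k).1 h)
  have hzN : (ζ ^ k) ^ N = 1 := by rw [← pow_mul, mul_comm, pow_mul, hζ.pow_eq_one, one_pow]
  have hcos (j : ℕ) : cos (2 * π * j * k / N) = ((ζ ^ k) ^ j).re := by
    rw [← pow_mul, ← Complex.exp_nat_mul, ← Complex.exp_ofReal_mul_I_re]
    push_cast
    ring_nf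
  simp_rw [hcos, ← Complex.re_sum, sum_Icc_pow_eq_zero hz hzN, Complex.zero_re]

lemma sum_cos_sq_eq_half_of_not_dvd {N k : ℕ} (hk : ¬ N ∣ 2 * k) :
    ∑ j ∈ Icc 1 N, cos (2 * π * j * k / N) ^ 2 = N / 2 := by
  have hdouble (j : ℕ) : 2 * (2 * π * j * k / N) = 2 * π * j * ↑(2 * k) / N := by
    push_cast; ring
  simp_rw [cos_sq, hdouble, sum_add_distrib, ← sum_div, sum_cos_eq_zero_of_not_dvd hk]
  simp

section Probability

variable {Ω : Type*} [MeasurableSpace Ω] {μ : Measure Ω} {X : Ω → ℝ}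

lemma ae_eq_zero_or_eq_one_of_measure_eq [IsProbabilityMeasure μ] (hX : Measurable X) {p : ℝ≥0∞}
    (h1 : μ {ω | X ω = 1} = p) (h0 : μ {ω | X ω = 0} = 1 - p) :
    ∀ᵐ ω ∂μ, X ω = 0 ∨ X ω = 1 := by
  have hp : p ≤ 1 := h1 ▸ prob_le_one
  have hm0 : MeasurableSet {ω | X ω = 0} := hX (measurableSet_singleton 0)
  have hm1 : MeasurableSet {ω | X ω = 1} := hX (measurableSet_singleton 1)
  have hdisj : Disjoint {ω | X ω = 0} {ω | X ω = 1} :=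
    Set.disjoint_left.2 fun ω h0 h1 ↦ by simp_all
  refine (ae_iff_measure_eq (p := fun ω ↦ X ω = 0 ∨ X ω = 1)
    (hm0.union hm1).nullMeasurableSet).2 ?_
  rw [Set.ofPred_or, measure_union hdisj hm1, h0, h1, tsub_add_cancel_of_le hp, measure_univ]

lemma integral_eq_measureReal_of_ae_eq_zero_or_one (hX : Measurable X)
    (h : ∀ᵐ ω ∂μ, X ω = 0 ∨ X ω = 1) : μ[X] = μ.real {ω | X ω = 1} := by
  have hm1 : MeasurableSet {ω | X ω = 1} := hX (measurableSet_singleton 1)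
  rw [← integral_indicator_one hm1]
  refine integral_congr_ae (h.mono fun ω hω ↦ ?_)
  rcases hω with h | h <;> simp [Set.indicator, h]

lemma pow_le_mul_exp (k : ℕ) {t y : ℝ} (ht : 0 < t) (hy : 0 ≤ y) :
    y ^ k ≤ (k / (t * exp 1)) ^ k * exp (t * y) := by
  obtain rfl | hk := eq_or_ne k 0
  · simpa using one_le_exp (mul_nonneg ht.le hy)
  have hk' : (0 : ℝ) < k := by positivity
  have h1 : t * y / k ≤ exp (t * y / k - 1) := by linarith [add_one_le_exp (t * y / k - 1)]
  calc y ^ k = (t * y / k) ^ k * (k / t) ^ k := by rw [← mul_pow]; field_simp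
    _ ≤ exp (t * y / k - 1) ^ k * (k / t) ^ k := by gcongr
    _ = (k / (t * exp 1)) ^ k * exp (t * y) := by
      rw [← exp_nat_mul, mul_sub, mul_div_cancel₀ _ hk'.ne', exp_sub, div_pow, div_pow, mul_pow,
        ← exp_nat_mul]
      field_simp

lemma pow_two_mul_le_mul_exp_add_exp (n : ℕ) {t : ℝ} (ht : 0 < t) (x : ℝ) :
    x ^ (2 * n) ≤ (2 * n / (t * exp 1)) ^ (2 * n) * (exp (t * x) + exp (-t * x)) := by
  have hexp : exp (t * |x|) ≤ exp (t * x) + exp (-t * x) := by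
    rcases abs_cases x with ⟨h, _⟩ | ⟨h, _⟩ <;> rw [h]
    · linarith [exp_pos (-t * x)]
    · rw [mul_neg, ← neg_mul]; linarith [exp_pos (t * x)]
  calc x ^ (2 * n) = |x| ^ (2 * n) := ((even_two_mul n).pow_abs x).symm
    _ ≤ (2 * n / (t * exp 1)) ^ (2 * n) * exp (t * |x|) := by
      exact_mod_cast pow_le_mul_exp (2 * n) ht (abs_nonneg x)
    _ ≤ _ := by gcongr

lemma ProbabilityTheory.HasSubgaussianMGF.integral_pow_two_mul_le {c : ℝ≥0}
    (h : HasSubgaussianMGF X c μ) (hc : 0 < c) {n : ℕ} (hn : n ≠ 0) :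
    ∫ ω, X ω ^ (2 * n) ∂μ ≤ 2 * (2 * n * c / exp 1) ^ n := by
  -- `t` minimises `(2n / (t e)) ^ (2n) * exp (c t² / 2)`.
  set t := √(2 * n / c)
  have ht : 0 < t := sqrt_pos.2 (by positivity)
  have ht2 : t ^ 2 = 2 * n / c := sq_sqrt (by positivity)
  set K := (2 * n / (t * exp 1)) ^ (2 * n) with hK_def
  have hK : K = (2 * n * c / exp 1 ^ 2) ^ n := by
    rw [hK_def, pow_mul, div_pow, mul_pow t, ht2]
    field_simp
  have hint (s : ℝ) := h.integrable_exp_mul s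
  calc ∫ ω, X ω ^ (2 * n) ∂μ ≤ ∫ ω, K * (exp (t * X ω) + exp (-t * X ω)) ∂μ :=
        integral_mono_of_nonneg (ae_of_all _ fun ω ↦ (even_two_mul n).pow_nonneg _)
          (((hint t).add (hint (-t))).const_mul K)
          (ae_of_all _ fun ω ↦ pow_two_mul_le_mul_exp_add_exp n ht (X ω))
    _ = K * (mgf X μ t + mgf X μ (-t)) := by
        rw [integral_const_mul, integral_add (hint t) (hint (-t))]
        rfl
    _ ≤ K * (exp (c * t ^ 2 / 2) + exp (c * (-t) ^ 2 / 2)) := by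
        gcongr
        exacts [h.mgf_le t, h.mgf_le (-t)]
    _ = 2 * (2 * n * c / exp 1) ^ n := by
        rw [neg_sq, ht2, mul_div_cancel₀ _ (by positivity : (c : ℝ) ≠ 0),
          mul_div_cancel_left₀ _ two_ne_zero, hK, ← exp_one_pow, div_pow, div_pow, ← pow_mul,
          mul_comm 2 n, pow_mul]
        field_simp
        ring

lemma hasSubgaussianMGF_sum_mul_sub_integral [IsProbabilityMeasure μ] {ι : Type*} [Fintype ι]
    {B : ι → Ω → ℝ} (hindep : iIndepFun B μ) (hmeas : ∀ i, Measurable (B i))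
    (hbound : ∀ i, ∀ᵐ ω ∂μ, B i ω ∈ Set.Icc 0 1) (a : ι → ℝ) :
    HasSubgaussianMGF (fun ω ↦ ∑ i, a i * (B i ω - μ[B i]))
      ⟨(∑ i, a i ^ 2) / 4, by positivity⟩ μ := by
  have hindep' := hindep.comp (fun i (y : ℝ) ↦ a i * (y - μ[B i])) fun i ↦ by fun_prop
  have hsum := HasSubgaussianMGF.sum_of_iIndepFun hindep' (s := univ) fun i _ ↦
      (hasSubgaussianMGF_of_mem_Icc (hmeas i).aemeasurable (hbound i)).const_mul (a i)
  refine (congrArg (fun c ↦ HasSubgaussianMGF _ c μ) ?_).mpr hsum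
  apply NNReal.eq
  norm_num [NNReal.coe_sum, div_eq_mul_inv, sum_mul]
  rfl

lemma hasSubgaussianMGF_sum_mul_of_bernoulli [IsProbabilityMeasure μ] {ι : Type*} [Fintype ι]
    {B : ι → Ω → ℝ} (hindep : iIndepFun B μ) (hmeas : ∀ i, Measurable (B i)) {p : ℝ≥0∞}
    (h1 : ∀ i, μ {ω | B i ω = 1} = p) (h0 : ∀ i, μ {ω | B i ω = 0} = 1 - p) {a : ι → ℝ}
    (ha : ∑ i, a i = 0) :
    HasSubgaussianMGF (fun ω ↦ ∑ i, a i * B i ω) ⟨(∑ i, a i ^ 2) / 4, by positivity⟩ μ := by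
  have h01 (i : ι) := ae_eq_zero_or_eq_one_of_measure_eq (hmeas i) (h1 i) (h0 i)
  have hmean (i : ι) : μ[B i] = p.toReal := by
    rw [integral_eq_measureReal_of_ae_eq_zero_or_one (hmeas i) (h01 i), measureReal_def, h1 i]
  have h := hasSubgaussianMGF_sum_mul_sub_integral hindep hmeas
    (fun i ↦ (h01 i).mono fun ω h ↦ by rcases h with h | h <;> simp [h]) a
  simpa only [hmean, mul_sub, sum_sub_distrib, ← sum_mul, ha, zero_mul, sub_zero] using h

end Probability

lemma two_mul_div_pow_le {n : ℕ} (hn : n ≠ 0) {x : ℝ} (hx : 0 ≤ x) :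
    2 * (n * x / (4 * exp 1)) ^ n
      ≤ n ^ (n + 1) * x ^ n / (2 ^ (2 * n - 1) * exp 1 ^ (n - 1)) := by
  obtain ⟨k, rfl⟩ := Nat.exists_eq_add_one_of_ne_zero hn
  have hrhs : ((k + 1 : ℕ) : ℝ) ^ (k + 1 + 1) * x ^ (k + 1)
        / (2 ^ (2 * (k + 1) - 1) * exp 1 ^ (k + 1 - 1))
      = 2 * ((k + 1 : ℕ) * x / (4 * exp 1)) ^ (k + 1) * ((k + 1 : ℕ) * exp 1) := by
    have h2 : (2 : ℝ) ^ (2 * k + 1) = 4 ^ k * 2 := by rw [pow_succ, pow_mul]; norm_num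
    rw [show 2 * (k + 1) - 1 = 2 * k + 1 by omega, Nat.add_sub_cancel, h2, div_pow, mul_pow,
      mul_pow]
    field_simp
    ring
  rw [hrhs]
  refine le_mul_of_one_le_right (by positivity) (one_le_mul_of_one_le_of_one_le ?_ ?_)
  · exact_mod_cast Nat.succ_pos k
  · exact one_le_exp zero_le_one

theorem stmt_15_general
    {Ω : Type*} [MeasurableSpace Ω] (P : Measure Ω) [IsProbabilityMeasure P]
    (N l m : ℕ) (hl : 0 < l) (hlN : l ≤ N - 1) (hNl : N ≠ 2 * l)
    (B : ℕ → Ω → ℝ) (hBmeas : ∀ n, Measurable (B n))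
    (hBindep : iIndepFun (fun i : Fin N => B (i.1 + 1)) P)
    (hB1 : ∀ n ∈ Finset.Icc 1 N, P {ω | B n ω = 1} = (m : ENNReal) / N)
    (hB0 : ∀ n ∈ Finset.Icc 1 N, P {ω | B n ω = 0} = 1 - (m : ENNReal) / N)
    (U : Ω → ℝ)
    (hU : U = fun ω => ∑ n ∈ Finset.Icc 1 N, Real.cos (2 * Real.pi * n * l / N) * B n ω) :
    ∀ n : ℕ, 1 ≤ n →
      (∫ ω, (U ω) ^ (2 * n) ∂P)
        ≤ (n : ℝ) ^ (n + 1) * (N : ℝ) ^ n / (2 ^ (2 * n - 1) * Real.exp 1 ^ (n - 1)) := by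
  intro n hn
  have hN : 0 < N := by omega
  set a : ℕ → ℝ := fun j ↦ cos (2 * π * j * l / N)
  have hsum : ∑ i : Fin N, a (i + 1) = 0 := by
    rw [← sum_Icc_one_eq_sum_fin a]
    exact sum_cos_eq_zero_of_not_dvd (Nat.not_dvd_of_pos_of_lt hl (by omega))
  have hsq : ∑ i : Fin N, a (i + 1) ^ 2 = N / 2 := by
    rw [← sum_Icc_one_eq_sum_fin (fun j ↦ a j ^ 2)]
    refine sum_cos_sq_eq_half_of_not_dvd ?_
    rintro ⟨_ | _ | c, hc⟩ <;> [omega; omega; nlinarith [show l < N by omega]]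
  have hU_subG := hasSubgaussianMGF_sum_mul_of_bernoulli hBindep (fun _ ↦ hBmeas _)
    (fun _ ↦ hB1 _ (by simp)) (fun _ ↦ hB0 _ (by simp)) hsum
  have hU_eq : (fun ω ↦ ∑ i : Fin N, a (i + 1) * B (i + 1) ω) = U := by
    rw [hU]
    exact funext fun ω ↦ (sum_Icc_one_eq_sum_fin (fun j ↦ a j * B j ω) N).symm
  rw [hU_eq] at hU_subG
  have hpos : (0 : ℝ) < (∑ i : Fin N, a (i + 1) ^ 2) / 4 := by rw [hsq]; positivity
  calc ∫ ω, U ω ^ (2 * n) ∂P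
      ≤ 2 * (2 * n * ((∑ i : Fin N, a (i + 1) ^ 2) / 4) / exp 1) ^ n :=
        hU_subG.integral_pow_two_mul_le (NNReal.coe_pos.1 hpos) (by omega)
    _ = 2 * (n * N / (4 * exp 1)) ^ n := by rw [hsq]; ring_nf
    _ ≤ _ := two_mul_div_pow_le (by omega) (Nat.cast_nonneg N)

theorem stmt_15
    {Ω : Type*} [MeasurableSpace Ω] (P : Measure Ω) [IsProbabilityMeasure P]
    (N l m : ℕ) (hN : 0 < N) (hl : 0 < l) (hlN : l ≤ N - 1) (hNl : N ≠ 2 * l) (hm : 1 ≤ m)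
    (hmN : m ≤ N)
    (B : ℕ → Ω → ℝ) (hBmeas : ∀ n, Measurable (B n))
    (hBindep : iIndepFun (fun i : Fin N => B (i.1 + 1)) P)
    (hB1 : ∀ n ∈ Finset.Icc 1 N, P {ω | B n ω = 1} = (m : ENNReal) / N)
    (hB0 : ∀ n ∈ Finset.Icc 1 N, P {ω | B n ω = 0} = 1 - (m : ENNReal) / N)
    (U : Ω → ℝ)
    (hU : U = fun ω => ∑ n ∈ Finset.Icc 1 N, Real.cos (2 * Real.pi * n * l / N) * B n ω) :
    ∀ n : ℕ, 1 ≤ n →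
      (∫ ω, (U ω) ^ (2 * n) ∂P)
        ≤ (n : ℝ) ^ (n + 1) * (N : ℝ) ^ n / (2 ^ (2 * n - 1) * Real.exp 1 ^ (n - 1)) :=
  stmt_15_general P N l m hl hlN hNl B hBmeas hBindep hB1 hB0 U hU
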